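/- Let (X, d) be an extended pseudometric space, A ⊆ X, and p ∈ [1, ∞]. Then the function d̄_p on the quotient X/A defined by d̄_p(x, y) = min(d(x, y), ‖(d(x, A), d(y, A))‖_p), with d̄_p(x, A) = d(x, A) and d̄_p(A, A) = 0, is an extended pseudometric on X/A which satisfies the p-strengthened triangle inequality d̄_p(x, y) ≤ ‖(d̄_p(x, A), d̄_p(y, A))‖_p with respect to the collapsed basepoint A. Moreover, if d satisfies the separation axiom and A is closed, then d̄_p satisfies the separation axiom. -/

import Mathlib

open scoped ENNReal BigOperators
noncomputable section

/-- An extended pseudometric. -/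
structure IsEPMetric {X : Type*} (d : X → X → ℝ≥0∞) : Prop where
  refl : ∀ x, d x x = 0
  symm : ∀ x y, d x y = d y x
  triangle : ∀ x y z, d x z ≤ d x y + d y z

/-- The ℓ^p norm of a finite tuple of extended nonnegative reals. -/
def lpNorm (p : ℝ≥0∞) {n : ℕ} (v : Fin n → ℝ≥0∞) : ℝ≥0∞ :=
  if p = ∞ then ⨆ i, v i else (∑ i, v i ^ p.toReal) ^ (1 / p.toReal)

variable {X : Type*}

/-- The congruence on the free commutative monoid (multisets) identifying
formal sums that differ by copies of the basepoint. -/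
def diagCon (x₀ : X) : AddCon (Multiset X) where
  r s t := ∃ a b : ℕ, s + Multiset.replicate a x₀ = t + Multiset.replicate b x₀
  iseqv := by
    constructor
    · exact fun s => ⟨0, 0, rfl⟩
    · rintro s t ⟨a, b, h⟩; exact ⟨b, a, h.symm⟩
    · rintro s t u ⟨a, b, h₁⟩ ⟨a', b', h₂⟩
      refine ⟨a + a', b' + b, ?_⟩
      have h3 : s + Multiset.replicate a x₀ + Multiset.replicate a' x₀
          = u + Multiset.replicate b' x₀ + Multiset.replicate b x₀ := by
        rw [h₁, add_right_comm, h₂, add_right_comm]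
      simpa [Multiset.replicate_add, add_assoc] using h3
  add' := by
    rintro s t s' t' ⟨a, b, h₁⟩ ⟨a', b', h₂⟩
    refine ⟨a + a', b + b', ?_⟩
    have h3 : (s + Multiset.replicate a x₀) + (s' + Multiset.replicate a' x₀)
        = (t + Multiset.replicate b x₀) + (t' + Multiset.replicate b' x₀) := by rw [h₁, h₂]
    calc s + s' + Multiset.replicate (a + a') x₀
        = (s + Multiset.replicate a x₀) + (s' + Multiset.replicate a' x₀) := by
          rw [Multiset.replicate_add]; exact add_add_add_comm s s' _ _
      _ = (t + Multiset.replicate b x₀) + (t' + Multiset.replicate b' x₀) := h3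
      _ = t + t' + Multiset.replicate (b + b') x₀ := by
          rw [Multiset.replicate_add]; exact (add_add_add_comm t t' _ _).symm

/-- The monoid of persistence diagrams on a pointed set. -/
abbrev Diagram (X : Type*) (x₀ : X) := (diagCon x₀).Quotient

/-- The canonical map `X → D(X,x₀)`. -/
def diagι (x₀ : X) (x : X) : Diagram X x₀ := (diagCon x₀).mk' {x}

/-- Pad a tuple to length `r` with copies of the basepoint. -/
def padTo (x₀ : X) {n : ℕ} (x : Fin n → X) (r : ℕ) : Fin r → X :=
  fun k => if h : (k : ℕ) < n then x ⟨k, h⟩ else x₀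

/-- The minimal ℓ^p matching cost between two tuples of equal length. -/
def matchCost (d : X → X → ℝ≥0∞) (p : ℝ≥0∞) {r : ℕ} (x y : Fin r → X) : ℝ≥0∞ :=
  ⨅ σ : Equiv.Perm (Fin r), lpNorm p (fun k => d (x k) (y (σ k)))

/-- A tuple enumerating a multiset. -/
def mFun (s : Multiset X) : Fin s.toList.length → X := fun k => s.toList.get k

/-- The p-Wasserstein cost between two multisets, padding both to the combined length. -/
def WpM (d : X → X → ℝ≥0∞) (x₀ : X) (p : ℝ≥0∞) (s t : Multiset X) : ℝ≥0∞ :=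
  matchCost d p (padTo x₀ (mFun s) (Multiset.card s + Multiset.card t))
                (padTo x₀ (mFun t) (Multiset.card s + Multiset.card t))

/-- The p-Wasserstein distance on the monoid of persistence diagrams. -/
def Wp (d : X → X → ℝ≥0∞) (x₀ : X) (p : ℝ≥0∞) (α β : Diagram X x₀) : ℝ≥0∞ :=
  ⨅ (s : Multiset X) (t : Multiset X) (_ : (diagCon x₀).mk' s = α)
    (_ : (diagCon x₀).mk' t = β), WpM d x₀ p s t

/-- The Lipschitz norm of a map between extended pseudometric spaces. -/
def eLipNorm {Y : Type*} (d : X → X → ℝ≥0∞) (ρ : Y → Y → ℝ≥0∞) (f : X → Y) : ℝ≥0∞ :=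
  sInf {C : ℝ≥0∞ | ∀ x y, ρ (f x) (f y) ≤ C * d x y}


/-! With `D x = d(x, A)`, the function `D` is `1`-Lipschitz for `d`. In the triangle inequality for
`min (d x y) ‖(D x, D y)‖_p`, a chain of two genuine distances is handled by the triangle
inequality of `d`; any chain using an `ℓ^p` leg is handled by moving the `d`-length of the other
leg into one coordinate (`D x ≤ d(x, y) + D y`) and applying Minkowski's inequality, using
`‖(t, 0)‖_p = t`. Points of `A` have `D = 0`, which gives the distances to the basepoint, and
`d̄_p` vanishes only if `d` does or both points lie at distance `0` from `A`. -/

section lpNorm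

variable {p : ℝ≥0∞}

lemma lpNorm_top {n : ℕ} (v : Fin n → ℝ≥0∞) : lpNorm ∞ v = ⨆ i, v i := if_pos rfl

lemma lpNorm_of_ne_top (hp : p ≠ ∞) {n : ℕ} (v : Fin n → ℝ≥0∞) :
    lpNorm p v = (∑ i, v i ^ p.toReal) ^ (1 / p.toReal) := if_neg hp

lemma lpNorm_mono {n : ℕ} {v w : Fin n → ℝ≥0∞} (h : v ≤ w) : lpNorm p v ≤ lpNorm p w := by
  rcases eq_or_ne p ∞ with rfl | hp
  · simp only [lpNorm_top]
    exact iSup_mono h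
  · simp only [lpNorm_of_ne_top hp]
    gcongr with i
    exact h i

lemma le_lpNorm (hp : p ≠ 0) {n : ℕ} (v : Fin n → ℝ≥0∞) (i : Fin n) : v i ≤ lpNorm p v := by
  rcases eq_or_ne p ∞ with rfl | hp'
  · rw [lpNorm_top]
    exact le_iSup v i
  · have hpos : 0 < p.toReal := ENNReal.toReal_pos hp hp'
    rw [lpNorm_of_ne_top hp']
    calc v i = (v i ^ p.toReal) ^ (1 / p.toReal) := by
          rw [one_div, ENNReal.rpow_rpow_inv hpos.ne']
      _ ≤ _ := by
          gcongr
          exact Finset.single_le_sum (fun j _ => (zero_le : 0 ≤ v j ^ p.toReal))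
            (Finset.mem_univ i)

theorem lpNorm_add_le (hp : 1 ≤ p) {n : ℕ} (v w : Fin n → ℝ≥0∞) :
    lpNorm p (v + w) ≤ lpNorm p v + lpNorm p w := by
  rcases eq_or_ne p ∞ with rfl | hp'
  · simp only [lpNorm_top]
    exact iSup_le fun i => add_le_add (le_iSup v i) (le_iSup w i)
  · simp only [lpNorm_of_ne_top hp']
    exact ENNReal.Lp_add_le _ _ _ (by simpa using ENNReal.toReal_mono hp' hp)

lemma lpNorm_pair_top (u v : ℝ≥0∞) : lpNorm ∞ ![u, v] = max u v := by
  rw [lpNorm_top]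
  exact le_antisymm (iSup_le fun i => by fin_cases i <;> simp)
    (max_le (le_iSup ![u, v] 0) (le_iSup ![u, v] 1))

lemma lpNorm_pair_of_ne_top (hp : p ≠ ∞) (u v : ℝ≥0∞) :
    lpNorm p ![u, v] = (u ^ p.toReal + v ^ p.toReal) ^ (1 / p.toReal) := by
  simp [lpNorm_of_ne_top hp, Fin.sum_univ_two]

lemma lpNorm_pair_comm (u v : ℝ≥0∞) : lpNorm p ![u, v] = lpNorm p ![v, u] := by
  rcases eq_or_ne p ∞ with rfl | hp
  · rw [lpNorm_pair_top, lpNorm_pair_top, max_comm]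
  · rw [lpNorm_pair_of_ne_top hp, lpNorm_pair_of_ne_top hp, add_comm]

lemma lpNorm_pair_zero_left (hp : p ≠ 0) (v : ℝ≥0∞) : lpNorm p ![0, v] = v := by
  rcases eq_or_ne p ∞ with rfl | hp'
  · rw [lpNorm_pair_top, max_eq_right zero_le]
  · have hpos : 0 < p.toReal := ENNReal.toReal_pos hp hp'
    rw [lpNorm_pair_of_ne_top hp', ENNReal.zero_rpow_of_pos hpos, zero_add, one_div,
      ENNReal.rpow_rpow_inv hpos.ne']

lemma lpNorm_pair_zero_right (hp : p ≠ 0) (u : ℝ≥0∞) : lpNorm p ![u, 0] = u := by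
  rw [lpNorm_pair_comm, lpNorm_pair_zero_left hp]

lemma lpNorm_pair_eq_zero_iff (hp : p ≠ 0) {u v : ℝ≥0∞} :
    lpNorm p ![u, v] = 0 ↔ u = 0 ∧ v = 0 := by
  refine ⟨fun h => ⟨?_, ?_⟩, fun ⟨hu, hv⟩ => by rw [hu, hv, lpNorm_pair_zero_left hp]⟩
  · simpa [h] using le_lpNorm hp ![u, v] 0
  · simpa [h] using le_lpNorm hp ![u, v] 1

lemma lpNorm_pair_mono {u u' v v' : ℝ≥0∞} (hu : u ≤ u') (hv : v ≤ v') :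
    lpNorm p ![u, v] ≤ lpNorm p ![u', v'] :=
  lpNorm_mono fun i => by fin_cases i <;> simpa

lemma lpNorm_pair_add_le (hp : 1 ≤ p) (a b c e : ℝ≥0∞) :
    lpNorm p ![a + b, c + e] ≤ lpNorm p ![a, c] + lpNorm p ![b, e] := by
  simpa using lpNorm_add_le hp ![a, c] ![b, e]

end lpNorm

lemma IsEPMetric.iInf_le_add_iInf {d : X → X → ℝ≥0∞} (hd : IsEPMetric d) (A : Set X)
    (x y : X) : ⨅ a ∈ A, d x a ≤ d x y + ⨅ a ∈ A, d y a :=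
  calc ⨅ a ∈ A, d x a ≤ ⨅ a ∈ A, (d x y + d y a) :=
        le_iInf₂ fun a ha => (iInf₂_le a ha).trans (hd.triangle x y a)
    _ = d x y + ⨅ a ∈ A, d y a := by simp_rw [← ENNReal.add_iInf]

/-- `D x` stands for the distance `d(x, A)` to the collapsed set, so `collapseDist d D p` is `d̄_p`
read on representatives in `X`. -/
def collapseDist (d : X → X → ℝ≥0∞) (D : X → ℝ≥0∞) (p : ℝ≥0∞) (x y : X) : ℝ≥0∞ :=
  min (d x y) (lpNorm p ![D x, D y])

section collapseDist

variable {d : X → X → ℝ≥0∞} {D : X → ℝ≥0∞} {p : ℝ≥0∞}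

lemma collapseDist_eq_zero_iff (hp : p ≠ 0) {x y : X} :
    collapseDist d D p x y = 0 ↔ d x y = 0 ∨ D x = 0 ∧ D y = 0 := by
  rw [collapseDist, ← lpNorm_pair_eq_zero_iff hp]
  exact min_eq_bot

lemma collapseDist_of_eq_zero_left (hd : IsEPMetric d) (hD : ∀ x y, D x ≤ d x y + D y)
    (hp : p ≠ 0) {x : X} (hx : D x = 0) (y : X) : collapseDist d D p x y = D y := by
  rw [collapseDist, hx, lpNorm_pair_zero_left hp]
  exact min_eq_right (by simpa [hx, hd.symm y x] using hD y x)

theorem isEPMetric_collapseDist (hd : IsEPMetric d) (hD : ∀ x y, D x ≤ d x y + D y)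
    (hp : 1 ≤ p) : IsEPMetric (collapseDist d D p) where
  refl x := by simp [collapseDist, hd.refl x]
  symm x y := by rw [collapseDist, collapseDist, hd.symm x y, lpNorm_pair_comm]
  triangle x y z := by
    have hp0 : p ≠ 0 := (zero_lt_one.trans_le hp).ne'
    simp only [collapseDist, ← min_add_add_left, ← min_add_add_right]
    refine le_min (le_min ?_ ?_) (le_min ?_ ?_)
    · exact (min_le_left _ _).trans (hd.triangle x y z)
    · calc min (d x z) (lpNorm p ![D x, D z])
          ≤ lpNorm p ![D x + 0, D y + d y z] := (min_le_right _ _).trans <| lpNorm_pair_mono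
            (add_zero (D x)).ge ((hD z y).trans_eq (by rw [hd.symm z y, add_comm]))
        _ ≤ lpNorm p ![D x, D y] + lpNorm p ![0, d y z] := lpNorm_pair_add_le hp _ _ _ _
        _ = lpNorm p ![D x, D y] + d y z := by rw [lpNorm_pair_zero_left hp0]
    · calc min (d x z) (lpNorm p ![D x, D z])
          ≤ lpNorm p ![d x y + D y, 0 + D z] := (min_le_right _ _).trans <| lpNorm_pair_mono
            (hD x y) (zero_add (D z)).ge
        _ ≤ lpNorm p ![d x y, 0] + lpNorm p ![D y, D z] := lpNorm_pair_add_le hp _ _ _ _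
        _ = d x y + lpNorm p ![D y, D z] := by rw [lpNorm_pair_zero_right hp0]
    · calc min (d x z) (lpNorm p ![D x, D z])
          ≤ lpNorm p ![D x + D y, D y + D z] := (min_le_right _ _).trans <| lpNorm_pair_mono
            le_self_add le_add_self
        _ ≤ lpNorm p ![D x, D y] + lpNorm p ![D y, D z] := lpNorm_pair_add_le hp _ _ _ _

end collapseDist

/-- The quotient metric `d̄_p` obtained by collapsing `A ⊆ X` to a point is an extended
pseudometric which collapses `A`, satisfies the p-strengthened triangle inequality with
respect to the collapsed basepoint, behaves as the distance to `A` against points of `A`,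
and satisfies separation on the quotient whenever `d` is separated and `A` is closed. -/
theorem quotient_metric_props (d : X → X → ℝ≥0∞) (hd : IsEPMetric d) (A : Set X)
    (p : ℝ≥0∞) (hp : 1 ≤ p) :
    IsEPMetric (fun x y => min (d x y) (lpNorm p ![⨅ a ∈ A, d x a, ⨅ a ∈ A, d y a])) ∧
    (∀ x y : X, min (d x y) (lpNorm p ![⨅ a ∈ A, d x a, ⨅ a ∈ A, d y a])
        ≤ lpNorm p ![⨅ a ∈ A, d x a, ⨅ a ∈ A, d y a]) ∧
    (∀ x ∈ A, ∀ y : X, min (d x y) (lpNorm p ![⨅ a ∈ A, d x a, ⨅ a ∈ A, d y a])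
        = ⨅ a ∈ A, d y a) ∧
    ((∀ x y : X, d x y = 0 → x = y) → (∀ x : X, (⨅ a ∈ A, d x a) = 0 → x ∈ A) →
      ∀ x y : X, min (d x y) (lpNorm p ![⨅ a ∈ A, d x a, ⨅ a ∈ A, d y a]) = 0 →
        x = y ∨ (x ∈ A ∧ y ∈ A)) := by
  have hD := hd.iInf_le_add_iInf A
  have hp0 : p ≠ 0 := (zero_lt_one.trans_le hp).ne'
  have hA : ∀ x ∈ A, ⨅ a ∈ A, d x a = 0 := fun x hx =>
    nonpos_iff_eq_zero.mp ((iInf₂_le x hx).trans_eq (hd.refl x))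
  refine ⟨isEPMetric_collapseDist hd hD hp, fun x y => min_le_right _ _,
    fun x hx => collapseDist_of_eq_zero_left hd hD hp0 (hA x hx), fun hsep hclosed x y h => ?_⟩
  rcases (collapseDist_eq_zero_iff (D := fun x => ⨅ a ∈ A, d x a) hp0).mp h with
    hxy | ⟨hx, hy⟩
  · exact Or.inl (hsep x y hxy)
  · exact Or.inr ⟨hclosed x hx, hclosed y hy⟩

end
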